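/- Let n = sm with m odd, a ∈ F_{2^s} nonzero, b ∈ F_{2^s}, and k with gcd(k, n) = 1. If x ∈ F_{2^n} satisfies x^{2^k} + x = b, then x ∈ F_{2^s}. -/

import Mathlib

/-! Put `y := x ^ 2 ^ s + x`. Additivity of Frobenius and `b ^ 2 ^ s = b` give `y ^ 2 ^ k = y`;
together with `y ^ 2 ^ n = y` and `gcd k n = 1` this forces `y ^ 2 = y`, so `y` is also fixed by
`z ↦ z ^ 2 ^ s`. Hence `x ^ 2 ^ (2 s) = (x + y) ^ 2 ^ s = x`, and `gcd (2 s) (s m) = s` for odd `m`. -/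

open Function

section Monoid

variable {M : Type*} [Monoid M] {x : M} {p i j : ℕ}

theorem isPeriodicPt_pow_iff : IsPeriodicPt (· ^ p) i x ↔ x ^ p ^ i = x := by
  rw [IsPeriodicPt, IsFixedPt, pow_iterate]

theorem pow_pow_pow_gcd_eq_self (hi : x ^ p ^ i = x) (hj : x ^ p ^ j = x) :
    x ^ p ^ i.gcd j = x :=
  isPeriodicPt_pow_iff.mp <| (isPeriodicPt_pow_iff.mpr hi).gcd (isPeriodicPt_pow_iff.mpr hj)

theorem pow_pow_pow_eq_self_of_pow_eq_self (h : x ^ p = x) (i : ℕ) : x ^ p ^ i = x := by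
  have h₁ : IsPeriodicPt (· ^ p) 1 x := isPeriodicPt_pow_iff.mpr (by rwa [pow_one])
  simpa using isPeriodicPt_pow_iff.mp (h₁.mul_const i)

end Monoid

namespace CharTwo

variable {R : Type*} [CommRing R] [CharP R 2] {x b : R} {s k : ℕ}

theorem pow_two_pow_add_self_pow_two_pow (hb : b ^ 2 ^ s = b) (hx : x ^ 2 ^ k + x = b) :
    (x ^ 2 ^ s + x) ^ 2 ^ k = x ^ 2 ^ s + x := by
  have hxk : x ^ 2 ^ k = b + x := CharTwo.add_eq_iff_eq_add.mp hx
  calc (x ^ 2 ^ s + x) ^ 2 ^ k = (x ^ 2 ^ k) ^ 2 ^ s + x ^ 2 ^ k := by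
        rw [add_pow_char_pow, ← pow_mul, ← pow_mul, mul_comm]
    _ = x ^ 2 ^ s + x := by
        rw [hxk, add_pow_char_pow, hb, add_add_add_comm, add_self_eq_zero, zero_add]

theorem pow_two_pow_two_mul_eq_self (hy : (x ^ 2 ^ s + x) ^ 2 ^ s = x ^ 2 ^ s + x) :
    x ^ 2 ^ (2 * s) = x := by
  rw [two_mul, pow_add, pow_mul, ← CharTwo.add_cancel_right (x ^ 2 ^ s) x, add_pow_char_pow, hy,
    add_right_comm, add_self_eq_zero, zero_add]

end CharTwo

theorem GaloisField.pow_char_pow_eq_self (p n : ℕ) [Fact p.Prime] (z : GaloisField p n) :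
    z ^ p ^ n = z := by
  rcases eq_or_ne n 0 with rfl | hn
  · rw [pow_zero, pow_one]
  · have := Fintype.ofFinite (GaloisField p n)
    rw [← GaloisField.card p n hn, Nat.card_eq_fintype_card, FiniteField.pow_card]

theorem Nat.gcd_two_mul_mul_of_odd {s m : ℕ} (hm : Odd m) : (2 * s).gcd (s * m) = s := by
  rw [mul_comm 2, Nat.gcd_mul_left, Nat.coprime_two_left.mpr hm, mul_one]

theorem stmt_16_general (s m n k : ℕ) (hm : Odd m) (hn : n = s * m)
    (hgcd : Nat.gcd k n = 1)
    (b : GaloisField 2 n) (hb : b ^ 2 ^ s = b)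
    (x : GaloisField 2 n) (hx : x ^ 2 ^ k + x = b) :
    x ^ 2 ^ s = x := by
  have hfix (z : GaloisField 2 n) : z ^ 2 ^ n = z := GaloisField.pow_char_pow_eq_self 2 n z
  set y := x ^ 2 ^ s + x
  have hy_k : y ^ 2 ^ k = y := CharTwo.pow_two_pow_add_self_pow_two_pow hb hx
  have hy_sq : y ^ 2 = y := by simpa [hgcd] using pow_pow_pow_gcd_eq_self hy_k (hfix y)
  have hx_2s : x ^ 2 ^ (2 * s) = x :=
    CharTwo.pow_two_pow_two_mul_eq_self (pow_pow_pow_eq_self_of_pow_eq_self hy_sq s)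
  simpa [hn, Nat.gcd_two_mul_mul_of_odd hm] using pow_pow_pow_gcd_eq_self hx_2s (hfix x)

/-- `n = s·m` with `m` odd, `gcd(k,n) = 1`, `a ∈ 𝔽_{2^s}*`, `b ∈ 𝔽_{2^s}`.
Every `x ∈ 𝔽_{2^n}` with `x^{2^k} + x = b` lies in `𝔽_{2^s}`. -/
theorem stmt_16 (s m n k : ℕ) (hs : 0 < s) (hm : Odd m) (hn : n = s * m)
    (hgcd : Nat.gcd k n = 1)
    (a b : GaloisField 2 n) (ha : a ^ 2 ^ s = a) (ha0 : a ≠ 0) (hb : b ^ 2 ^ s = b)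
    (x : GaloisField 2 n) (hx : x ^ 2 ^ k + x = b) :
    x ^ 2 ^ s = x :=
  stmt_16_general s m n k hm hn hgcd b hb x hx
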